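/- arXiv:math/9802111 — 2 statements merged into one kernel-verified Lean document; each statement's English description precedes it below -/
import Mathlib

section
/- For the energy function on pairs of one-row tableaux: if p = [p_1···p_N] and p' = [p'_1···p'_N] are one-row tableaux of length N over {1,...,n}, then the number of boxes of shape(p·p') lying in the second row equals max over permutations τ ∈ S_N of ∑_{i=1}^N χ(p_i > p'_{τ(i)}), i.e., h(p ⊗ p') = max_{τ∈S_N} #{i : p_i > p'_{τ(i)}}. -/
/-- The positions in `S` form a (weakly) increasing subsequence of the word `w`. -/
def IncAlong (w : List ℕ) (S : Finset ℕ) : Prop :=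
  ∀ p ∈ S, ∀ q ∈ S, p < q →
    ∀ (hp : p < w.length) (hq : q < w.length), w.get ⟨p, hp⟩ ≤ w.get ⟨q, hq⟩

/-- `Lval w k`: the largest possible total length of `k` pairwise disjoint (weakly)
increasing subsequences of the word `w` (Greene invariant). -/
noncomputable def Lval (w : List ℕ) (k : ℕ) : ℕ :=
  sSup {n | ∃ S : Fin k → Finset ℕ,
    (∀ i, S i ⊆ Finset.range w.length) ∧
    (∀ i j, i ≠ j → Disjoint (S i) (S j)) ∧
    (∀ i, IncAlong w (S i)) ∧
    ∑ i, (S i).card = n}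

/-- The shape of the word `w` (equivalently, of its RSK insertion tableau), via
Greene's theorem: row `k` (indexed from 0) has length `L(w,k+1) - L(w,k)`. -/
noncomputable def gshape (w : List ℕ) (k : ℕ) : ℕ := Lval w (k + 1) - Lval w k

/-- The rectangular partition `(w^h)` as a shape function. -/
def rect (w h : ℕ) : ℕ → ℕ := fun r => if r < h then w else 0

/-- `T : ℕ → ℕ → ℕ` is a semistandard Young tableau of rectangular shape `(w^h)`
over the alphabet `{1,…,n}` (rows indexed from 0, bottom row first; rows weakly
increase, columns strictly increase going up), supported on the rectangle. -/
def IsRectTab (n w h : ℕ) (T : ℕ → ℕ → ℕ) : Prop :=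
  (∀ r c, ¬ (r < h ∧ c < w) → T r c = 0) ∧
  (∀ r c, r < h → c < w → 1 ≤ T r c ∧ T r c ≤ n) ∧
  (∀ r c, r < h → c + 1 < w → T r c ≤ T r (c + 1)) ∧
  (∀ r c, r + 1 < h → c < w → T r c < T (r + 1) c)

/-- The row word of a rectangular tableau: entries read left to right, down the page
(top row first). -/
def rWord (w h : ℕ) (T : ℕ → ℕ → ℕ) : List ℕ :=
  (((List.range h).reverse).map (fun r => (List.range w).map (T r))).flatten

set_option maxHeartbeats 2000000 in
/-- For one-row tableaux `p = [p_1⋯p_N]`, `p' = [p'_1⋯p'_N]` over `{1,…,n}`, the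
energy `h(p ⊗ p') = 2N - |shape(p·p') ∩ (2N)|` (the number of boxes of the plactic
product outside the single row of length `2N`) equals
`max_{τ ∈ S_N} #{i : p_i > p'_{τ(i)}}`. -/
theorem energy_one_row (N n : ℕ) (p p' : Fin N → ℕ)
    (hp : Monotone p) (hp' : Monotone p')
    (hpn : ∀ i, 1 ≤ p i ∧ p i ≤ n) (hp'n : ∀ i, 1 ≤ p' i ∧ p' i ≤ n) :
    2 * N - Lval (List.ofFn p ++ List.ofFn p') 1
      = Finset.univ.sup
          (fun τ : Equiv.Perm (Fin N) =>
            (Finset.univ.filter (fun i => p' (τ i) < p i)).card) := by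
  classical
  obtain ⟨w, hw⟩ : ∃ w : List ℕ, w = List.ofFn p ++ List.ofFn p' := ⟨_, rfl⟩
  rw [← hw]
  have hwlen : w.length = N + N := by rw [hw]; simp
  have hgetp : ∀ (q : ℕ) (hq : q < N) (h : q < w.length),
      w.get ⟨q, h⟩ = p ⟨q, hq⟩ := by
    intro q hq h
    subst hw
    simp only [List.get_eq_getElem]
    rw [List.getElem_append_left (by simpa using hq)]
    simp
  have hgetp' : ∀ (j : ℕ) (hj : j < N) (h : N + j < w.length),
      w.get ⟨N + j, h⟩ = p' ⟨j, hj⟩ := by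
    intro j hj h
    subst hw
    simp only [List.get_eq_getElem]
    rw [List.getElem_append_right (by simp)]
    simp
  obtain ⟨Q, hQ⟩ : ∃ Q : ℕ → ℕ, Q = fun j => if hj : j < N then p' ⟨j, hj⟩ else n + 1 :=
    ⟨_, rfl⟩
  have hQlt : ∀ (j : ℕ) (hj : j < N), Q j = p' ⟨j, hj⟩ := by
    intro j hj
    rw [hQ]
    exact dif_pos hj
  have hQN : Q N = n + 1 := by
    rw [hQ]
    exact dif_neg (lt_irrefl N)
  obtain ⟨B, hBapp⟩ : ∃ B : ℕ → ℕ,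
      ∀ j, B j = (Finset.univ.filter (fun i : Fin N => Q j < p i)).card :=
    ⟨_, fun _ => rfl⟩
  obtain ⟨F, hFapp⟩ : ∃ F : ℕ → ℕ, ∀ j, F j = B j + j := ⟨_, fun _ => rfl⟩
  obtain ⟨js, hjsmem, hjsmin⟩ :=
    Finset.exists_min_image (Finset.range (N + 1)) F ⟨0, Finset.mem_range.2 (Nat.succ_pos N)⟩
  have hjsN : js ≤ N := by have := Finset.mem_range.1 hjsmem; omega
  obtain ⟨m, hm⟩ : ∃ m : ℕ, m = F js := ⟨_, rfl⟩
  have hFN : F N = N := by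
    have hB0 : B N = 0 := by
      rw [hBapp N, Finset.card_eq_zero, Finset.filter_eq_empty_iff]
      intro i _
      have := (hpn i).2
      rw [hQN]
      omega
    rw [hFapp N, hB0]
    omega
  have hmN : m ≤ N := by
    have := hjsmin N (Finset.mem_range.2 (by omega))
    omega
  -- key combinatorial fact
  have key : ∀ k, k < m → ∀ (h : N - m + k < N), Q k < p ⟨N - m + k, h⟩ := by
    intro k hk h
    by_contra hle
    push_neg at hle
    have hsub : (Finset.univ.filter (fun i : Fin N => Q k < p i)) ⊆
        Finset.univ.filter (fun i : Fin N => N - m + k < i.val) := by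
      intro i hi
      simp only [Finset.mem_filter, Finset.mem_univ, true_and] at hi ⊢
      by_contra hcon
      push_neg at hcon
      have hple : p i ≤ p ⟨N - m + k, h⟩ := hp (show i ≤ (⟨N - m + k, h⟩ : Fin N) from hcon)
      omega
    have hcard2 : (Finset.univ.filter (fun i : Fin N => N - m + k < i.val)).card
        ≤ m - k - 1 := by
      have h1 : (Finset.univ.filter (fun i : Fin N => N - m + k < i.val)).card
          ≤ (Finset.Ico (N - m + k + 1) N).card := by
        apply Finset.card_le_card_of_injOn (fun i : Fin N => i.val)
        · intro i hi
          simp only [Finset.mem_coe, Finset.mem_filter, Finset.mem_univ, true_and] at hi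
          simp only [Finset.mem_coe, Finset.mem_Ico]
          exact ⟨by omega, i.isLt⟩
        · intro a _ b _ hab
          exact Fin.ext hab
      rw [Nat.card_Ico] at h1
      omega
    have hBk : B k ≤ m - k - 1 := by
      rw [hBapp k]
      exact le_trans (Finset.card_le_card hsub) hcard2
    have hmin := hjsmin k (Finset.mem_range.2 (by omega))
    rw [hFapp k] at hmin
    omega
  -- upper bound for every permutation
  have hub : ∀ τ : Equiv.Perm (Fin N),
      (Finset.univ.filter (fun i => p' (τ i) < p i)).card ≤ m := by
    intro τ
    have hsub : (Finset.univ.filter (fun i => p' (τ i) < p i)) ⊆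
        (Finset.univ.filter (fun i : Fin N => (τ i).val < js)) ∪
        (Finset.univ.filter (fun i : Fin N => Q js < p i)) := by
      intro i hi
      simp only [Finset.mem_filter, Finset.mem_univ, true_and, Finset.mem_union] at hi ⊢
      by_cases hlt : (τ i).val < js
      · exact Or.inl hlt
      · right
        push_neg at hlt
        have hjsltN : js < N := lt_of_le_of_lt hlt (τ i).isLt
        have h1 : Q js ≤ p' (τ i) := by
          rw [hQlt js hjsltN]
          exact hp' (show (⟨js, hjsltN⟩ : Fin N) ≤ τ i from hlt)
        omega
    have hA : (Finset.univ.filter (fun i : Fin N => (τ i).val < js)).card ≤ js := by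
      have h2 : (Finset.univ.filter (fun i : Fin N => (τ i).val < js)).card
          ≤ (Finset.range js).card := by
        apply Finset.card_le_card_of_injOn (fun i : Fin N => (τ i).val)
        · intro i hi
          simp only [Finset.mem_coe, Finset.mem_filter, Finset.mem_univ, true_and] at hi
          exact Finset.mem_range.2 hi
        · intro a _ b _ hab
          exact τ.injective (Fin.ext hab)
      simpa using h2
    have hmain := Finset.card_le_card hsub
    have hcards := Finset.card_union_le
      (Finset.univ.filter (fun i : Fin N => (τ i).val < js))
      (Finset.univ.filter (fun i : Fin N => Q js < p i))
    have h1 := hFapp js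
    have h2 := hBapp js
    omega
  -- lower bound: some permutation achieves m
  have hlb : ∃ τ : Equiv.Perm (Fin N),
      m ≤ (Finset.univ.filter (fun i => p' (τ i) < p i)).card := by
    rcases Nat.eq_zero_or_pos m with hm0 | hmpos
    · exact ⟨1, by omega⟩
    · have hNpos : 0 < N := by omega
      haveI : NeZero N := ⟨by omega⟩
      open Fin.NatCast in refine ⟨Equiv.addRight ((m : Fin N)), ?_⟩
      open Fin.NatCast in
      have hτ : ∀ (k : ℕ) (hk : k < m) (h : N - m + k < N) (hkN : k < N),
          (Equiv.addRight ((m : Fin N))) ⟨N - m + k, h⟩ = (⟨k, hkN⟩ : Fin N) := by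
        intro k hk h hkN
        apply Fin.ext
        simp only [Equiv.coe_addRight]
        rw [Fin.val_add, Fin.val_natCast]
        show ((N - m + k) + m % N) % N = k
        rw [Nat.add_mod_mod]
        have h2 : N - m + k + m = N + k := by omega
        rw [h2, Nat.add_mod_left, Nat.mod_eq_of_lt (by omega)]
      open Fin.NatCast in
      have hmle : (Finset.range m).card ≤
          (Finset.univ.filter (fun i => p' ((Equiv.addRight ((m : Fin N))) i) < p i)).card := by
        apply Finset.card_le_card_of_injOn
          (fun k : ℕ => (⟨(N - m + k) % N, Nat.mod_lt _ hNpos⟩ : Fin N))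
        · intro k hkr
          have hk : k < m := Finset.mem_range.1 hkr
          have hlt : N - m + k < N := by omega
          have hkN : k < N := by omega
          have hfk : (⟨(N - m + k) % N, Nat.mod_lt _ hNpos⟩ : Fin N) = ⟨N - m + k, hlt⟩ := by
            apply Fin.ext
            simp [Nat.mod_eq_of_lt hlt]
          simp only [Finset.mem_coe, Finset.mem_filter, Finset.mem_univ, true_and]
          rw [hfk, hτ k hk hlt hkN]
          have hkey := key k hk hlt
          rw [hQlt k hkN] at hkey
          exact hkey
        · intro a ha b hb hab
          have ha' : a < m := Finset.mem_range.1 ha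
          have hb' : b < m := Finset.mem_range.1 hb
          have hval : (N - m + a) % N = (N - m + b) % N := congrArg Fin.val hab
          rw [Nat.mod_eq_of_lt (by omega), Nat.mod_eq_of_lt (by omega)] at hval
          omega
      simpa using hmle
  have hRHS : Finset.univ.sup (fun τ : Equiv.Perm (Fin N) =>
      (Finset.univ.filter (fun i => p' (τ i) < p i)).card) = m := by
    apply le_antisymm
    · exact Finset.sup_le fun τ _ => hub τ
    · obtain ⟨τ, hτ⟩ := hlb
      exact le_trans hτ (Finset.le_sup
        (f := fun τ : Equiv.Perm (Fin N) =>
          (Finset.univ.filter (fun i => p' (τ i) < p i)).card)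
        (Finset.mem_univ τ))
  -- the Lval side
  obtain ⟨LSet, hLSet⟩ : ∃ LSet : Set ℕ, LSet = {n0 | ∃ S : Fin 1 → Finset ℕ,
      (∀ i, S i ⊆ Finset.range w.length) ∧
      (∀ i j, i ≠ j → Disjoint (S i) (S j)) ∧
      (∀ i, IncAlong w (S i)) ∧
      ∑ i, (S i).card = n0} := ⟨_, rfl⟩
  have hLval_def : Lval w 1 = sSup LSet := by
    rw [hLSet]
    rfl
  have hupper : ∀ x ∈ LSet, x ≤ N + N - m := by
    intro x hx
    rw [hLSet] at hx
    obtain ⟨S, hSsub, -, hSinc, hSsum⟩ := hx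
    have hpair : ∀ k, k < m → ¬ ((N - m + k) ∈ S 0 ∧ (N + k) ∈ S 0) := by
      rintro k hk ⟨h1, h2⟩
      have hl1 : N - m + k < w.length := by omega
      have hl2 : N + k < w.length := by omega
      have hkN : k < N := by omega
      have hiN : N - m + k < N := by omega
      have hmono := hSinc 0 (N - m + k) h1 (N + k) h2 (by omega) hl1 hl2
      rw [hgetp (N - m + k) hiN hl1, hgetp' k hkN hl2] at hmono
      have hkey := key k hk hiN
      have hQk := hQlt k hkN
      omega
    have hcard : (S 0).card ≤ N + N - m := by
      have hmaps : ∀ q ∈ S 0, (if N ≤ q ∧ q < N + m then q - m else q) ∈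
          Finset.range (N + N) \ Finset.Ico N (N + m) := by
        intro q hq
        have hqlen : q < N + N := by
          have h3 := hSsub 0 hq
          rw [Finset.mem_range, hwlen] at h3
          exact h3
        simp only [Finset.mem_sdiff, Finset.mem_range, Finset.mem_Ico]
        split_ifs with hband
        · omega
        · omega
      have hinj : Set.InjOn (fun q => if N ≤ q ∧ q < N + m then q - m else q) (S 0) := by
        intro x hx y hy hxy
        simp only at hxy
        by_cases hbx : N ≤ x ∧ x < N + m <;> by_cases hby : N ≤ y ∧ y < N + m
        · rw [if_pos hbx, if_pos hby] at hxy; omega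
        · rw [if_pos hbx, if_neg hby] at hxy
          exfalso
          refine hpair (x - N) (by omega) ⟨?_, ?_⟩
          · have he : N - m + (x - N) = y := by omega
            rwa [he]
          · have he : N + (x - N) = x := by omega
            rwa [he]
        · rw [if_neg hbx, if_pos hby] at hxy
          exfalso
          refine hpair (y - N) (by omega) ⟨?_, ?_⟩
          · have he : N - m + (y - N) = x := by omega
            rwa [he]
          · have he : N + (y - N) = y := by omega
            rwa [he]
        · rw [if_neg hbx, if_neg hby] at hxy; exact hxy
      have hle := Finset.card_le_card_of_injOn _ hmaps hinj
      have hIcoSub : Finset.Ico N (N + m) ⊆ Finset.range (N + N) := by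
        intro q hq
        simp only [Finset.mem_Ico] at hq
        simp only [Finset.mem_range]
        omega
      rw [Finset.card_sdiff_of_subset hIcoSub, Nat.card_Ico, Finset.card_range] at hle
      omega
    have hsum1 : ∑ i : Fin 1, (S i).card = (S 0).card := by
      simp [Fin.sum_univ_one]
    omega
  -- the witness subsequence
  obtain ⟨S0, hS0⟩ : ∃ S0 : Finset ℕ, S0 =
      ((Finset.univ.filter (fun i : Fin N => ¬ Q js < p i)).image Fin.val) ∪
        Finset.Ico (N + js) (N + N) := ⟨_, rfl⟩
  have hsubS0 : S0 ⊆ Finset.range w.length := by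
    intro q hq
    rw [hS0] at hq
    simp only [Finset.mem_union, Finset.mem_image, Finset.mem_filter, Finset.mem_univ,
      true_and, Finset.mem_Ico] at hq
    rw [Finset.mem_range, hwlen]
    rcases hq with ⟨i, -, rfl⟩ | ⟨-, h⟩
    · have := i.isLt; omega
    · omega
  have hinc : IncAlong w S0 := by
    intro q1 hq1 q2 hq2 hlt h1 h2
    rw [hS0] at hq1 hq2
    simp only [Finset.mem_union, Finset.mem_image, Finset.mem_filter, Finset.mem_univ,
      true_and, Finset.mem_Ico] at hq1 hq2
    rcases hq1 with ⟨i1, hi1, rfl⟩ | ⟨ha1, hb1⟩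
    · rcases hq2 with ⟨i2, hi2, rfl⟩ | ⟨ha2, hb2⟩
      · rw [hgetp _ i1.isLt h1, hgetp _ i2.isLt h2]
        exact hp (show i1 ≤ i2 from Nat.le_of_lt hlt)
      · obtain ⟨j, rfl⟩ : ∃ j, q2 = N + j := ⟨q2 - N, by omega⟩
        have hjN : j < N := by omega
        rw [hgetp _ i1.isLt h1, hgetp' j hjN h2]
        have hjsltN : js < N := by omega
        have h3 : p i1 ≤ Q js := not_lt.1 hi1
        rw [hQlt js hjsltN] at h3
        have h4 : p' ⟨js, hjsltN⟩ ≤ p' ⟨j, hjN⟩ := hp' (Fin.mk_le_mk.2 (by omega))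
        exact le_trans h3 h4
    · rcases hq2 with ⟨i2, hi2, rfl⟩ | ⟨ha2, hb2⟩
      · exfalso
        have := i2.isLt
        omega
      · obtain ⟨j1, rfl⟩ : ∃ j, q1 = N + j := ⟨q1 - N, by omega⟩
        obtain ⟨j2, rfl⟩ : ∃ j, q2 = N + j := ⟨q2 - N, by omega⟩
        rw [hgetp' j1 (by omega) h1, hgetp' j2 (by omega) h2]
        exact hp' (Fin.mk_le_mk.2 (by omega))
  have hmemx : S0.card ∈ LSet := by
    rw [hLSet]
    refine ⟨fun _ => S0, fun _ => hsubS0, ?_, fun _ => hinc, ?_⟩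
    · intro i j hij
      exact absurd (Subsingleton.elim i j) hij
    · simp
  have hxge : N + N - m ≤ S0.card := by
    have hd : Disjoint ((Finset.univ.filter (fun i : Fin N => ¬ Q js < p i)).image Fin.val)
        (Finset.Ico (N + js) (N + N)) := by
      rw [Finset.disjoint_left]
      rintro a ha hb
      simp only [Finset.mem_image, Finset.mem_filter, Finset.mem_univ, true_and] at ha
      obtain ⟨i, -, rfl⟩ := ha
      have := i.isLt
      simp only [Finset.mem_Ico] at hb
      omega
    have hcu : S0.card =
        ((Finset.univ.filter (fun i : Fin N => ¬ Q js < p i)).image Fin.val).card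
          + (Finset.Ico (N + js) (N + N)).card := by
      rw [hS0]
      exact Finset.card_union_of_disjoint hd
    rw [Finset.card_image_of_injective _ Fin.val_injective, Nat.card_Ico] at hcu
    have h1 : (Finset.univ : Finset (Fin N)) \
        (Finset.univ.filter (fun i : Fin N => Q js < p i)) ⊆
        Finset.univ.filter (fun i : Fin N => ¬ Q js < p i) := by
      intro i hi
      simp only [Finset.mem_sdiff, Finset.mem_filter, Finset.mem_univ, true_and] at hi ⊢
      exact hi
    have h2 := Finset.card_le_card h1
    rw [Finset.card_sdiff_of_subset (Finset.filter_subset _ _), Finset.card_univ, Fintype.card_fin] at h2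
    have hBj := hBapp js
    have hFj := hFapp js
    have hBle : (Finset.univ.filter (fun i : Fin N => Q js < p i)).card ≤ N := by
      have := Finset.card_filter_le (Finset.univ : Finset (Fin N))
        (fun i : Fin N => Q js < p i)
      simpa using this
    omega
  have hbdd : BddAbove LSet := ⟨N + N - m, fun x hx => hupper x hx⟩
  have hge : N + N - m ≤ Lval w 1 := by
    rw [hLval_def]
    exact le_trans hxge (le_csSup hbdd hmemx)
  have hle : Lval w 1 ≤ N + N - m := by
    rw [hLval_def]
    exact csSup_le ⟨_, hmemx⟩ hupper
  rw [hRHS]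
  omega
end

section
/- For paths of length two with rectangular steps over the alphabet {1,...,n}: the energy is invariant under the duality anti-automorphism, h(Ω(p') ⊗ Ω(p)) = h(p ⊗ p'), where Ω acts on a rectangular tableau by rotating 180 degrees and complementing each entry i ↦ n+1−i. -/
/-- The duality anti-automorphism `Ω` on a rectangular tableau of shape `(w^h)` over
`{1,…,n}`: rotate the filling by 180° and replace each entry `i` by `n+1-i`. -/
def om (n w h : ℕ) (T : ℕ → ℕ → ℕ) : ℕ → ℕ → ℕ :=
  fun r c => if r < h ∧ c < w then n + 1 - T (h - 1 - r) (w - 1 - c) else 0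

/-- The energy `h(p ⊗ p') = |ν + ν'| - |shape(p·p') ∩ (ν + ν')|` for steps of
rectangular shapes `ν, ν'` (as (width, height) pairs), where the shape of the plactic
product is computed from the word `wd = w_p ++ w_{p'}` via Greene invariants. -/
noncomputable def hEnergy (ν ν' : ℕ × ℕ) (wd : List ℕ) : ℕ :=
  ν.1 * ν.2 + ν'.1 * ν'.2 -
    ∑ k ∈ Finset.range (max ν.2 ν'.2),
      min (gshape wd k) (rect ν.1 ν.2 k + rect ν'.1 ν'.2 k)

/- ### Auxiliary lemmas -/

lemma range_reverse_eq (h : ℕ) :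
    (List.range h).reverse = (List.range h).map (fun t => h - 1 - t) := by
  apply List.ext_getElem
  · simp
  · intro i h1 h2
    simp only [List.getElem_reverse, List.length_range, List.getElem_range, List.getElem_map]

/-- The defining set of `Lval` is bounded above. -/
lemma Lval_bdd (w : List ℕ) (k : ℕ) : ∀ m ∈ {n | ∃ S : Fin k → Finset ℕ,
    (∀ i, S i ⊆ Finset.range w.length) ∧
    (∀ i j, i ≠ j → Disjoint (S i) (S j)) ∧
    (∀ i, IncAlong w (S i)) ∧
    ∑ i, (S i).card = n}, m ≤ k * w.length := by
  rintro m ⟨S, hsub, -, -, rfl⟩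
  calc ∑ i, (S i).card ≤ ∑ _i : Fin k, w.length := by
        apply Finset.sum_le_sum
        intro i _
        simpa using Finset.card_le_card (hsub i)
    _ = k * w.length := by simp [Finset.sum_const, mul_comm]

/-- The defining set of `Lval` is nonempty. -/
lemma Lval_nonempty (w : List ℕ) (k : ℕ) : Set.Nonempty {n | ∃ S : Fin k → Finset ℕ,
    (∀ i, S i ⊆ Finset.range w.length) ∧
    (∀ i j, i ≠ j → Disjoint (S i) (S j)) ∧
    (∀ i, IncAlong w (S i)) ∧
    ∑ i, (S i).card = n} := by
  refine ⟨0, fun _ => ∅, by simp, by simp, ?_, by simp⟩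
  intro i p hp
  simp at hp

/-- `Lval` does not decrease under reverse-complement. -/
lemma Lval_le_rc (n : ℕ) (w : List ℕ) (k : ℕ) :
    Lval w k ≤ Lval ((w.map (fun x => n + 1 - x)).reverse) k := by
  set f : ℕ → ℕ := fun x => n + 1 - x with hf
  set w' : List ℕ := (w.map f).reverse with hw'
  have hL : w'.length = w.length := by simp [hw']
  unfold Lval
  apply csSup_le (Lval_nonempty w k)
  rintro m ⟨S, hsub, hdis, hinc, rfl⟩
  apply le_csSup ⟨k * w'.length, Lval_bdd w' k⟩
  have hmem : ∀ {ii p}, p ∈ S ii → p < w.length := fun {ii p} hp =>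
    Finset.mem_range.mp (hsub ii hp)
  refine ⟨fun ii => (S ii).image (fun p => w.length - 1 - p), ?_, ?_, ?_, ?_⟩
  · intro ii x hx
    simp only [Finset.mem_image] at hx
    obtain ⟨p, hp, rfl⟩ := hx
    have := hmem hp
    simp only [Finset.mem_range, hL]
    omega
  · intro ii jj hij
    rw [Finset.disjoint_left]
    intro x hxi hxj
    simp only [Finset.mem_image] at hxi hxj
    obtain ⟨p, hp, hpe⟩ := hxi
    obtain ⟨q, hq, hqe⟩ := hxj
    have hpL := hmem hp
    have hqL := hmem hq
    have : p = q := by omega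
    subst this
    exact (Finset.disjoint_left.mp (hdis ii jj hij)) hp hq
  · intro ii x hx y hy hxy hx' hy'
    simp only [Finset.mem_image] at hx hy
    obtain ⟨p, hp, hpe⟩ := hx
    obtain ⟨q, hq, hqe⟩ := hy
    have hpL := hmem hp
    have hqL := hmem hq
    have hqp : q < p := by omega
    have key := hinc ii q hq p hp hqp (by omega) (by omega)
    simp only [List.get_eq_getElem] at key ⊢
    have ex : ∀ (z p : ℕ) (hz : z < w'.length) (hpw : p < w.length)
        (hzp : z = w.length - 1 - p), w'[z] = f (w[p]'hpw) := by
      intro z p hz hpw hzp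
      rw [hL] at hz
      simp only [hw', List.getElem_reverse, List.getElem_map, List.length_map]
      have hidx : w.length - 1 - z = p := by omega
      simp only [hidx]
    rw [ex x p hx' hpL hpe.symm, ex y q hy' hqL hqe.symm]
    exact Nat.sub_le_sub_left key (n + 1)
  · apply Finset.sum_congr rfl
    intro ii _
    apply Finset.card_image_of_injOn
    intro p hp q hq hpq
    simp only at hpq
    have := hmem (Finset.mem_coe.mp hp)
    have := hmem (Finset.mem_coe.mp hq)
    omega

lemma rc_rc (n : ℕ) (w : List ℕ) (hw : ∀ x ∈ w, x ≤ n + 1) :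
    ((((w.map (fun x => n + 1 - x)).reverse).map (fun x => n + 1 - x)).reverse) = w := by
  rw [List.map_reverse, List.reverse_reverse, List.map_map]
  conv_rhs => rw [← List.map_id w]
  apply List.map_congr_left
  intro x hx
  have := hw x hx
  simp only [Function.comp_apply, id]
  omega

lemma Lval_rc (n : ℕ) (w : List ℕ) (k : ℕ) (hw : ∀ x ∈ w, x ≤ n + 1) :
    Lval ((w.map (fun x => n + 1 - x)).reverse) k = Lval w k := by
  refine le_antisymm ?_ (Lval_le_rc n w k)
  have h := Lval_le_rc n ((w.map (fun x => n + 1 - x)).reverse) k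
  rwa [rc_rc n w hw] at h

lemma rWord_om (n w h : ℕ) (T : ℕ → ℕ → ℕ) :
    rWord w h (om n w h T) = ((rWord w h T).map (fun x => n + 1 - x)).reverse := by
  set f : ℕ → ℕ := fun x => n + 1 - x with hf
  unfold rWord
  rw [List.map_flatten, List.reverse_flatten, List.map_map, List.map_map,
    ← List.map_reverse, List.reverse_reverse]
  rw [range_reverse_eq, List.map_map]
  apply congrArg List.flatten
  apply List.map_congr_left
  intro t ht
  rw [List.mem_range] at ht
  simp only [Function.comp_apply]
  rw [List.map_map, ← List.map_reverse, range_reverse_eq, List.map_map]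
  apply List.map_congr_left
  intro c hc
  rw [List.mem_range] at hc
  simp only [Function.comp_apply, om]
  rw [if_pos ⟨by omega, hc⟩]
  have : h - 1 - (h - 1 - t) = t := by omega
  rw [this]

lemma rWord_le (n w h : ℕ) (T : ℕ → ℕ → ℕ) (hT : IsRectTab n w h T) :
    ∀ x ∈ rWord w h T, x ≤ n + 1 := by
  intro x hx
  unfold rWord at hx
  rw [List.mem_flatten] at hx
  obtain ⟨l, hl, hxl⟩ := hx
  rw [List.mem_map] at hl
  obtain ⟨r, hr, rfl⟩ := hl
  rw [List.mem_reverse, List.mem_range] at hr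
  rw [List.mem_map] at hxl
  obtain ⟨c, hc, rfl⟩ := hxl
  rw [List.mem_range] at hc
  exact le_trans (hT.2.1 r c hr hc).2 (by omega)

/-- The energy of a two-step path is invariant under the duality anti-automorphism:
`h(Ω(p') ⊗ Ω(p)) = h(p ⊗ p')` for rectangular tableaux `p ∈ B_{(i^a)}`,
`p' ∈ B_{(j^b)}` over `{1,…,n}`. -/
theorem energy_omega_invariant (n i a j b : ℕ) (T T' : ℕ → ℕ → ℕ)
    (hT : IsRectTab n i a T) (hT' : IsRectTab n j b T') :
    hEnergy (j, b) (i, a) (rWord j b (om n j b T') ++ rWord i a (om n i a T))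
      = hEnergy (i, a) (j, b) (rWord i a T ++ rWord j b T') := by
  set f : ℕ → ℕ := fun x => n + 1 - x with hf
  set wd : List ℕ := rWord i a T ++ rWord j b T' with hwd
  have key : rWord j b (om n j b T') ++ rWord i a (om n i a T)
      = (wd.map f).reverse := by
    rw [rWord_om, rWord_om, hwd, List.map_append, List.reverse_append]
  have hb : ∀ x ∈ wd, x ≤ n + 1 := by
    intro x hx
    rcases List.mem_append.mp hx with hx | hx
    · exact rWord_le n i a T hT x hx
    · exact rWord_le n j b T' hT' x hx
  have hg : ∀ k, gshape ((wd.map f).reverse) k = gshape wd k := by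
    intro k
    unfold gshape
    rw [Lval_rc n wd _ hb, Lval_rc n wd _ hb]
  rw [key]
  unfold hEnergy
  simp only
  have hsum : ∑ k ∈ Finset.range (max b a),
      min (gshape ((wd.map f).reverse) k) (rect j b k + rect i a k)
      = ∑ k ∈ Finset.range (max a b),
        min (gshape wd k) (rect i a k + rect j b k) := by
    rw [Nat.max_comm]
    apply Finset.sum_congr rfl
    intro k _
    rw [hg k, Nat.add_comm]
  rw [hsum, Nat.add_comm (j * b)]
end
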